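/- arXiv:1511.07263 — 4 statements merged into one kernel-verified Lean document; each statement's English description precedes it below -/
import Mathlib

section
/- Generalized monotonicity bound: let A ∈ ℝ^{n×d} and M ∈ ℝ^{n×d'} satisfy M Mᵀ ⪯ A Aᵀ (PSD ordering), and assume ‖M - M_k‖_F² > 0. Then for every column aᵢ of A, aᵢᵀ(AAᵀ + (‖A-A_k‖_F²/k)I)⁻¹ aᵢ ≤ aᵢᵀ(MMᵀ + (‖M-M_k‖_F²/k)I)⁻¹ aᵢ. -/
open Matrix BigOperators

noncomputable section

/-- Squared Frobenius norm. -/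
def frob2 {m n : ℕ} (A : Matrix (Fin m) (Fin n) ℝ) : ℝ := ∑ i, ∑ j, (A i j) ^ 2

/-- `X` is an orthogonal projection of rank at most `k`. -/
def IsOrthProj {n : ℕ} (k : ℕ) (X : Matrix (Fin n) (Fin n) ℝ) : Prop :=
  Xᵀ = X ∧ X * X = X ∧ X.rank ≤ k

/-- `‖A - A_k‖_F²`, the squared Frobenius error of the best rank-`k` approximation,
characterized as the infimum over rank-`≤k` orthogonal projections. -/
def tailNorm2 {n d : ℕ} (k : ℕ) (A : Matrix (Fin n) (Fin d) ℝ) : ℝ :=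
  sInf { e | ∃ X : Matrix (Fin n) (Fin n) ℝ, IsOrthProj k X ∧ e = frob2 (A - X * A) }

/-- Moore–Penrose conditions. -/
def IsMoorePenrose {n : ℕ} (A P : Matrix (Fin n) (Fin n) ℝ) : Prop :=
  A * P * A = A ∧ P * A * P = P ∧ (A * P)ᵀ = A * P ∧ (P * A)ᵀ = P * A

/-- Moore–Penrose pseudoinverse. -/
def pinv {n : ℕ} (A : Matrix (Fin n) (Fin n) ℝ) : Matrix (Fin n) (Fin n) ℝ :=
  letI := Classical.propDecidable
  if h : ∃ P, IsMoorePenrose A P then h.choose else 0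

/-- Loewner (PSD) order. -/
def lle {n : ℕ} (M N : Matrix (Fin n) (Fin n) ℝ) : Prop := (N - M).PosSemidef

/-- `i`-th column of a matrix. -/
def col {n d : ℕ} (A : Matrix (Fin n) (Fin d) ℝ) (i : Fin d) : Fin n → ℝ := fun r => A r i

/-- Ridge leverage score `τ̄_i(A) = aᵢᵀ (A Aᵀ + (‖A-A_k‖_F²/k)·I)⁺ aᵢ`. -/
def ridgeScore {n d : ℕ} (k : ℕ) (A : Matrix (Fin n) (Fin d) ℝ) (i : Fin d) : ℝ :=
  _root_.col A i ⬝ᵥ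
    (pinv (A * Aᵀ + (tailNorm2 k A / (k : ℝ)) • (1 : Matrix (Fin n) (Fin n) ℝ)) *ᵥ _root_.col A i)

namespace RidgeAux

variable {n : ℕ}

lemma dot_symm (B : Matrix (Fin n) (Fin n) ℝ) (hB : B.IsHermitian) (u v : Fin n → ℝ) :
    u ⬝ᵥ (B *ᵥ v) = v ⬝ᵥ (B *ᵥ u) := by
  have htr : Bᵀ = B := by
    rw [← Matrix.conjTranspose_eq_transpose_of_trivial, hB.eq]
  rw [dotProduct_mulVec, ← htr, vecMul_transpose, htr, dotProduct_comm]

lemma psd_cs (B : Matrix (Fin n) (Fin n) ℝ) (hB : B.PosSemidef) (u v : Fin n → ℝ) :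
    (u ⬝ᵥ (B *ᵥ v)) ^ 2 ≤ (u ⬝ᵥ (B *ᵥ u)) * (v ⬝ᵥ (B *ᵥ v)) := by
  have key : ∀ t : ℝ, 0 ≤ (v ⬝ᵥ (B *ᵥ v)) * (t * t) + (2 * (u ⬝ᵥ (B *ᵥ v))) * t
      + (u ⬝ᵥ (B *ᵥ u)) := by
    intro t
    have h := hB.dotProduct_mulVec_nonneg (u + t • v)
    simp only [star_trivial, mulVec_add, mulVec_smul, add_dotProduct, dotProduct_add,
      smul_dotProduct, dotProduct_smul, smul_eq_mul] at h
    rw [dot_symm B hB.isHermitian v u] at h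
    ring_nf at h ⊢
    linarith
  have hd := discrim_le_zero key
  simp only [discrim] at hd
  nlinarith [hd]

lemma psd_self (B : Matrix (Fin n) (Fin n) ℝ) (hB : B.PosSemidef) (u : Fin n → ℝ) :
    0 ≤ u ⬝ᵥ (B *ᵥ u) := by
  have := hB.dotProduct_mulVec_nonneg u
  simpa using this

lemma inv_dot_le (B C : Matrix (Fin n) (Fin n) ℝ) (hB : B.PosDef) (hC : C.PosDef)
    (h : (C - B).PosSemidef) (x : Fin n → ℝ) :
    x ⬝ᵥ (C⁻¹ *ᵥ x) ≤ x ⬝ᵥ (B⁻¹ *ᵥ x) := by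
  set u := C⁻¹ *ᵥ x with hu
  set v := B⁻¹ *ᵥ x with hv
  have hCu : C *ᵥ u = x := by
    rw [hu, mulVec_mulVec, Matrix.mul_nonsing_inv _ ((Matrix.isUnit_iff_isUnit_det _).1 hC.isUnit),
      one_mulVec]
  have hBv : B *ᵥ v = x := by
    rw [hv, mulVec_mulVec, Matrix.mul_nonsing_inv _ ((Matrix.isUnit_iff_isUnit_det _).1 hB.isUnit),
      one_mulVec]
  have hp : x ⬝ᵥ u = u ⬝ᵥ (C *ᵥ u) := by
    rw [hCu, dotProduct_comm]
  have hq : x ⬝ᵥ v = v ⬝ᵥ (B *ᵥ v) := by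
    rw [hBv, dotProduct_comm]
  have hub : u ⬝ᵥ (B *ᵥ v) = x ⬝ᵥ u := by
    rw [hBv, dotProduct_comm]
  have h1 : u ⬝ᵥ (B *ᵥ u) ≤ u ⬝ᵥ (C *ᵥ u) := by
    have := psd_self _ h u
    simp only [sub_mulVec, dotProduct_sub] at this
    linarith
  have h2 : 0 ≤ v ⬝ᵥ (B *ᵥ v) := psd_self _ hB.posSemidef v
  have h3 : 0 ≤ u ⬝ᵥ (B *ᵥ u) := psd_self _ hB.posSemidef u
  have hcs := psd_cs B hB.posSemidef u v
  have hp0 : 0 ≤ x ⬝ᵥ u := by rw [hp]; exact psd_self _ hC.posSemidef u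
  -- (x⬝u)^2 ≤ (u⬝Bu)(v⬝Bv) ≤ (x⬝u)(x⬝v)
  have hkey : (x ⬝ᵥ u) ^ 2 ≤ (x ⬝ᵥ u) * (x ⬝ᵥ v) := by
    rw [hub] at hcs
    calc (x ⬝ᵥ u) ^ 2 ≤ (u ⬝ᵥ (B *ᵥ u)) * (v ⬝ᵥ (B *ᵥ v)) := hcs
      _ ≤ (u ⬝ᵥ (C *ᵥ u)) * (v ⬝ᵥ (B *ᵥ v)) := by nlinarith
      _ = (x ⬝ᵥ u) * (x ⬝ᵥ v) := by rw [hp, hq]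
  rcases eq_or_lt_of_le hp0 with h0 | h0
  · rw [← h0, hq]; exact h2
  · have := (mul_le_mul_iff_right₀ h0).1 (by nlinarith : (x ⬝ᵥ u) * (x ⬝ᵥ u) ≤ (x ⬝ᵥ u) * (x ⬝ᵥ v))
    exact this

lemma frob2_nonneg {m d : ℕ} (B : Matrix (Fin m) (Fin d) ℝ) : 0 ≤ frob2 B :=
  Finset.sum_nonneg fun _ _ => Finset.sum_nonneg fun _ _ => sq_nonneg _

lemma frob2_eq_trace {m d : ℕ} (B : Matrix (Fin m) (Fin d) ℝ) : frob2 B = (B * Bᵀ).trace := by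
  simp [frob2, Matrix.trace, Matrix.mul_apply, Matrix.diag, sq]

lemma trace_nonneg_of_psd (P : Matrix (Fin n) (Fin n) ℝ) (hP : P.PosSemidef) : 0 ≤ P.trace := by
  rw [Matrix.trace]
  apply Finset.sum_nonneg
  intro i _
  have := hP.dotProduct_mulVec_nonneg (Pi.single i 1)
  simpa [Matrix.mulVec_single, single_dotProduct, Matrix.diag] using this

lemma tail_mono {d d' k : ℕ} (A : Matrix (Fin n) (Fin d) ℝ) (M : Matrix (Fin n) (Fin d') ℝ)
    (h : (A * Aᵀ - M * Mᵀ).PosSemidef) : tailNorm2 k M ≤ tailNorm2 k A := by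
  have hkey : ∀ X : Matrix (Fin n) (Fin n) ℝ, IsOrthProj k X →
      frob2 (M - X * M) ≤ frob2 (A - X * A) := by
    intro X hX
    have hAd : A - X * A = (1 - X) * A := by rw [Matrix.sub_mul, Matrix.one_mul]
    have hMd : M - X * M = (1 - X) * M := by rw [Matrix.sub_mul, Matrix.one_mul]
    rw [hAd, hMd, frob2_eq_trace, frob2_eq_trace]
    have e1 : ((1 - X) * A) * ((1 - X) * A)ᵀ = (1 - X) * (A * Aᵀ) * (1 - X)ᵀ := by
      simp only [Matrix.transpose_mul, Matrix.mul_assoc]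
    have e2 : ((1 - X) * M) * ((1 - X) * M)ᵀ = (1 - X) * (M * Mᵀ) * (1 - X)ᵀ := by
      simp only [Matrix.transpose_mul, Matrix.mul_assoc]
    rw [e1, e2]
    have hps : ((1 - X) * (A * Aᵀ - M * Mᵀ) * (1 - X)ᵀ).PosSemidef := by
      have := h.mul_mul_conjTranspose_same (1 - X)
      rwa [Matrix.conjTranspose_eq_transpose_of_trivial] at this
    have htr := trace_nonneg_of_psd _ hps
    have hsplit : (1 - X) * (A * Aᵀ - M * Mᵀ) * (1 - X)ᵀ
        = (1 - X) * (A * Aᵀ) * (1 - X)ᵀ - (1 - X) * (M * Mᵀ) * (1 - X)ᵀ := by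
      rw [Matrix.mul_sub, Matrix.sub_mul]
    rw [hsplit, Matrix.trace_sub] at htr
    linarith
  have hzero : IsOrthProj k (0 : Matrix (Fin n) (Fin n) ℝ) :=
    ⟨Matrix.transpose_zero, by simp, by simp [Matrix.rank_zero]⟩
  have hbdd : BddBelow { e | ∃ X : Matrix (Fin n) (Fin n) ℝ,
      IsOrthProj k X ∧ e = frob2 (M - X * M) } := by
    refine ⟨0, ?_⟩
    rintro e ⟨X, _, rfl⟩
    exact frob2_nonneg _
  have hne : { e | ∃ X : Matrix (Fin n) (Fin n) ℝ,
      IsOrthProj k X ∧ e = frob2 (A - X * A) }.Nonempty :=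
    ⟨frob2 (A - 0 * A), 0, hzero, rfl⟩
  apply le_csInf hne
  rintro e ⟨X, hX, rfl⟩
  calc sInf _ ≤ frob2 (M - X * M) := csInf_le hbdd ⟨X, hX, rfl⟩
    _ ≤ frob2 (A - X * A) := hkey X hX

lemma dot_self_pos {x : Fin n → ℝ} (hx : x ≠ 0) : 0 < x ⬝ᵥ x := by
  have h0 : 0 ≤ x ⬝ᵥ x := Finset.sum_nonneg fun i _ => mul_self_nonneg _
  rcases eq_or_lt_of_le h0 with h | h
  · exact absurd (dotProduct_self_eq_zero.1 h.symm) hx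
  · exact h

lemma smul_one_psd {c : ℝ} (hc : 0 ≤ c) : (c • (1 : Matrix (Fin n) (Fin n) ℝ)).PosSemidef := by
  rw [Matrix.posSemidef_iff_dotProduct_mulVec]
  constructor
  · simp [Matrix.IsHermitian]
  · intro x
    have h0 : 0 ≤ x ⬝ᵥ x := Finset.sum_nonneg fun i _ => mul_self_nonneg _
    simp only [star_trivial, Matrix.smul_mulVec, one_mulVec, dotProduct_smul, smul_eq_mul]
    positivity

lemma add_smul_one_posDef {S : Matrix (Fin n) (Fin n) ℝ} (hS : S.PosSemidef) {c : ℝ}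
    (hc : 0 < c) : (S + c • (1 : Matrix (Fin n) (Fin n) ℝ)).PosDef := by
  rw [Matrix.posDef_iff_dotProduct_mulVec]
  constructor
  · have hst : Sᵀ = S := by
      rw [← Matrix.conjTranspose_eq_transpose_of_trivial, hS.isHermitian.eq]
    show (S + c • (1 : Matrix (Fin n) (Fin n) ℝ))ᴴ = _
    simp [Matrix.conjTranspose_add, Matrix.conjTranspose_smul, hst]
  · intro x hx
    have h1 := psd_self S hS x
    have h2 := dot_self_pos hx
    simp only [star_trivial, add_mulVec, dotProduct_add, Matrix.smul_mulVec, one_mulVec,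
      dotProduct_smul, smul_eq_mul]
    nlinarith

end RidgeAux

theorem generalized_monotonicity {n d d' k : ℕ} (hk : 1 ≤ k)
    (A : Matrix (Fin n) (Fin d) ℝ) (M : Matrix (Fin n) (Fin d') ℝ)
    (hMA : lle (M * Mᵀ) (A * Aᵀ)) (htailM : 0 < tailNorm2 k M) :
    ∀ i : Fin d,
      _root_.col A i ⬝ᵥ ((A * Aᵀ + (tailNorm2 k A / (k : ℝ)) • (1 : Matrix (Fin n) (Fin n) ℝ))⁻¹ *ᵥ _root_.col A i)
        ≤ _root_.col A i ⬝ᵥ ((M * Mᵀ + (tailNorm2 k M / (k : ℝ)) • (1 : Matrix (Fin n) (Fin n) ℝ))⁻¹ *ᵥ _root_.col A i) := by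
  intro i
  have hAM : (A * Aᵀ - M * Mᵀ).PosSemidef := hMA
  have htail : tailNorm2 k M ≤ tailNorm2 k A := RidgeAux.tail_mono A M hAM
  have hkpos : (0 : ℝ) < (k : ℝ) := by exact_mod_cast Nat.lt_of_lt_of_le Nat.zero_lt_one hk
  have htailA : 0 < tailNorm2 k A := lt_of_lt_of_le htailM htail
  have hApsd : (A * Aᵀ).PosSemidef := by
    have := Matrix.posSemidef_self_mul_conjTranspose A
    rwa [Matrix.conjTranspose_eq_transpose_of_trivial] at this
  have hMpsd : (M * Mᵀ).PosSemidef := by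
    have := Matrix.posSemidef_self_mul_conjTranspose M
    rwa [Matrix.conjTranspose_eq_transpose_of_trivial] at this
  have hNA := RidgeAux.add_smul_one_posDef hApsd (div_pos htailA hkpos)
  have hNM := RidgeAux.add_smul_one_posDef hMpsd (div_pos htailM hkpos)
  have hdiffeq : (A * Aᵀ + (tailNorm2 k A / (k : ℝ)) • (1 : Matrix (Fin n) (Fin n) ℝ))
      - (M * Mᵀ + (tailNorm2 k M / (k : ℝ)) • (1 : Matrix (Fin n) (Fin n) ℝ))
      = (A * Aᵀ - M * Mᵀ) + (tailNorm2 k A / (k : ℝ) - tailNorm2 k M / (k : ℝ)) •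
        (1 : Matrix (Fin n) (Fin n) ℝ) := by
    rw [sub_smul]; abel
  have hdiff : ((A * Aᵀ + (tailNorm2 k A / (k : ℝ)) • (1 : Matrix (Fin n) (Fin n) ℝ))
      - (M * Mᵀ + (tailNorm2 k M / (k : ℝ)) • (1 : Matrix (Fin n) (Fin n) ℝ))).PosSemidef := by
    rw [hdiffeq]
    exact hAM.add (RidgeAux.smul_one_psd (by
      have : tailNorm2 k M / (k : ℝ) ≤ tailNorm2 k A / (k : ℝ) :=
        div_le_div_of_nonneg_right htail hkpos.le
      linarith))
  exact RidgeAux.inv_dot_le _ _ hNM hNA hdiff (_root_.col A i)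
end
end

section
/- For PSD matrices B and C with the same column span, B ⪯ C implies C⁺ ⪯ B⁺, where ⁺ denotes the Moore–Penrose pseudoinverse. -/
open Matrix BigOperators

noncomputable section

/-! ### Auxiliary lemmas -/

lemma dot_symm {n : ℕ} {M : Matrix (Fin n) (Fin n) ℝ} (hM : Mᵀ = M) (u v : Fin n → ℝ) :
    u ⬝ᵥ M *ᵥ v = v ⬝ᵥ M *ᵥ u := by
  rw [dotProduct_mulVec, ← hM, vecMul_transpose, dotProduct_comm, hM]

lemma mulVec_dot {n : ℕ} (M : Matrix (Fin n) (Fin n) ℝ) (u v : Fin n → ℝ) :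
    (M *ᵥ u) ⬝ᵥ v = u ⬝ᵥ (Mᵀ *ᵥ v) := by
  rw [dotProduct_mulVec, vecMul_transpose, dotProduct_comm]

lemma psd_iff {n : ℕ} (M : Matrix (Fin n) (Fin n) ℝ) :
    M.PosSemidef ↔ M.IsHermitian ∧ ∀ x : Fin n → ℝ, 0 ≤ x ⬝ᵥ M *ᵥ x := by
  constructor
  · intro h; exact ⟨h.1, fun x => by simpa using h.dotProduct_mulVec_nonneg x⟩
  · intro h; exact Matrix.PosSemidef.of_dotProduct_mulVec_nonneg h.1 fun x => by simpa using h.2 x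

lemma herm_of_t {n : ℕ} {M : Matrix (Fin n) (Fin n) ℝ} (h : Mᵀ = M) : M.IsHermitian := by
  show Mᴴ = M
  rw [Matrix.conjTranspose_eq_transpose_of_trivial]; exact h

lemma t_of_herm {n : ℕ} {M : Matrix (Fin n) (Fin n) ℝ} (h : M.IsHermitian) : Mᵀ = M := by
  have h' : Mᴴ = M := h
  ext i j
  have h2 := congrFun (congrFun h' i) j
  simp only [Matrix.conjTranspose_apply, RCLike.star_def, starRingEnd_apply, star_trivial] at h2
  simpa [Matrix.transpose_apply] using h2

lemma ext_mulVec {n : ℕ} {M N : Matrix (Fin n) (Fin n) ℝ}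
    (h : ∀ v, M *ᵥ v = N *ᵥ v) : M = N := by
  ext i j
  have := congrFun (h (Pi.single j 1)) i
  simpa [Matrix.mulVec_single] using this

lemma mp_exists {n : ℕ} (A : Matrix (Fin n) (Fin n) ℝ) (hA : A.IsHermitian) :
    ∃ P, IsMoorePenrose A P := by
  set U : Matrix (Fin n) (Fin n) ℝ := (hA.eigenvectorUnitary : Matrix (Fin n) (Fin n) ℝ) with hU
  have h3 : star U = Uᵀ := by
    ext i j; simp [Matrix.star_eq_conjTranspose, Matrix.conjTranspose_apply]
  have h1 : U * Uᵀ = 1 := by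
    rw [← h3]; exact (Matrix.mem_unitaryGroup_iff).mp hA.eigenvectorUnitary.2
  have h2 : Uᵀ * U = 1 := by
    rw [← h3]; exact (Matrix.mem_unitaryGroup_iff').mp hA.eigenvectorUnitary.2
  set d : Fin n → ℝ := hA.eigenvalues with hd
  have hspec : A = U * diagonal d * Uᵀ := by
    have := hA.spectral_theorem
    rw [Unitary.conjStarAlgAut_apply, h3] at this
    simpa using this
  set dinv : Fin n → ℝ := fun i => if d i = 0 then 0 else (d i)⁻¹ with hdinv
  set P : Matrix (Fin n) (Fin n) ℝ := U * diagonal dinv * Uᵀ with hP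
  have key : ∀ e f : Fin n → ℝ,
      (U * diagonal e * Uᵀ) * (U * diagonal f * Uᵀ) = U * diagonal (fun i => e i * f i) * Uᵀ := by
    intro e f
    have h5 : Uᵀ * (U * (diagonal f * Uᵀ)) = diagonal f * Uᵀ := by
      rw [← Matrix.mul_assoc, h2, Matrix.one_mul]
    calc (U * diagonal e * Uᵀ) * (U * diagonal f * Uᵀ)
        = U * (diagonal e * (Uᵀ * (U * (diagonal f * Uᵀ)))) := by simp only [Matrix.mul_assoc]
      _ = U * (diagonal e * diagonal f * Uᵀ) := by rw [h5, Matrix.mul_assoc]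
      _ = U * diagonal (fun i => e i * f i) * Uᵀ := by
          rw [diagonal_mul_diagonal, Matrix.mul_assoc]
  have keyT : ∀ e : Fin n → ℝ, (U * diagonal e * Uᵀ)ᵀ = U * diagonal e * Uᵀ := by
    intro e
    rw [Matrix.transpose_mul, Matrix.transpose_mul, transpose_transpose, diagonal_transpose,
      Matrix.mul_assoc]
  refine ⟨P, ?_, ?_, ?_, ?_⟩
  · rw [hspec, hP, key, key]
    congr 2
    ext i j
    by_cases h : d i = 0 <;>
      simp [Matrix.diagonal_apply, hdinv, h] <;> intro hij <;> field_simp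
  · rw [hspec, hP, key, key]
    congr 2
    ext i j
    by_cases h : d i = 0 <;>
      simp [Matrix.diagonal_apply, hdinv, h] <;> intro hij <;> field_simp
  · rw [hspec, hP, key, keyT]
  · rw [hspec, hP, key, keyT]

lemma mp_unique {n : ℕ} {A P Q : Matrix (Fin n) (Fin n) ℝ}
    (hP : IsMoorePenrose A P) (hQ : IsMoorePenrose A Q) : P = Q := by
  obtain ⟨hP1, hP2, hP3, hP4⟩ := hP
  obtain ⟨hQ1, hQ2, hQ3, hQ4⟩ := hQ
  have e1 : A * P = A * Q := by
    calc A * P = (A * P)ᵀ := hP3.symm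
      _ = ((A * Q * A) * P)ᵀ := by rw [hQ1]
      _ = ((A * Q) * (A * P))ᵀ := by simp only [Matrix.mul_assoc]
      _ = (A * P)ᵀ * (A * Q)ᵀ := by rw [Matrix.transpose_mul]
      _ = (A * P) * (A * Q) := by rw [hP3, hQ3]
      _ = (A * P * A) * Q := by simp only [Matrix.mul_assoc]
      _ = A * Q := by rw [hP1]
  have e2 : P * A = Q * A := by
    calc P * A = (P * A)ᵀ := hP4.symm
      _ = (P * (A * Q * A))ᵀ := by rw [hQ1]
      _ = ((P * A) * (Q * A))ᵀ := by simp only [Matrix.mul_assoc]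
      _ = (Q * A)ᵀ * (P * A)ᵀ := by rw [Matrix.transpose_mul]
      _ = (Q * A) * (P * A) := by rw [hQ4, hP4]
      _ = Q * (A * P * A) := by simp only [Matrix.mul_assoc]
      _ = Q * A := by rw [hP1]
  calc P = P * A * P := hP2.symm
    _ = P * (A * Q) := by rw [Matrix.mul_assoc, e1]
    _ = (Q * A) * Q := by rw [← Matrix.mul_assoc, e2]
    _ = Q := by rw [hQ2]

lemma pinv_spec {n : ℕ} (A : Matrix (Fin n) (Fin n) ℝ) (h : ∃ P, IsMoorePenrose A P) :
    IsMoorePenrose A (pinv A) := by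
  unfold pinv
  rw [dif_pos h]
  exact h.choose_spec

lemma pinv_t {n : ℕ} {A : Matrix (Fin n) (Fin n) ℝ} (hA : Aᵀ = A)
    (h : ∃ P, IsMoorePenrose A P) : (pinv A)ᵀ = pinv A := by
  have hPmp := pinv_spec A h
  set P := pinv A with hPdef
  obtain ⟨hh1, hh2, hh3, hh4⟩ := hPmp
  refine mp_unique ?_ ⟨hh1, hh2, hh3, hh4⟩
  refine ⟨?_, ?_, ?_, ?_⟩
  · calc A * Pᵀ * A = (Aᵀ * P * Aᵀ)ᵀ := by
          simp only [Matrix.transpose_mul, transpose_transpose, Matrix.mul_assoc]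
      _ = (A * P * A)ᵀ := by rw [hA]
      _ = A := by rw [hh1, hA]
  · calc Pᵀ * A * Pᵀ = (P * Aᵀ * P)ᵀ := by
          simp only [Matrix.transpose_mul, transpose_transpose, Matrix.mul_assoc]
      _ = (P * A * P)ᵀ := by rw [hA]
      _ = Pᵀ := by rw [hh2]
  · have : A * Pᵀ = P * A := by
      calc A * Pᵀ = Aᵀ * Pᵀ := by rw [hA]
        _ = (P * A)ᵀ := by rw [Matrix.transpose_mul]
        _ = P * A := hh4
    rw [this, hh4]
  · have : Pᵀ * A = A * P := by
      calc Pᵀ * A = Pᵀ * Aᵀ := by rw [hA]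
        _ = (A * P)ᵀ := by rw [Matrix.transpose_mul]
        _ = A * P := hh3
    rw [this, hh3]

lemma proj_unique {n : ℕ} {P Q : Matrix (Fin n) (Fin n) ℝ}
    (hPt : Pᵀ = P) (hQt : Qᵀ = Q) (hPP : P * P = P) (hQQ : Q * Q = Q)
    (hr : LinearMap.range P.mulVecLin = LinearMap.range Q.mulVecLin) : P = Q := by
  have hQP : Q * P = P := by
    apply ext_mulVec
    intro v
    have hmem : P *ᵥ v ∈ LinearMap.range Q.mulVecLin := by
      rw [← hr]; exact ⟨v, by simp [Matrix.mulVecLin_apply]⟩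
    obtain ⟨w, hw⟩ := hmem
    rw [Matrix.mulVecLin_apply] at hw
    rw [← Matrix.mulVec_mulVec, ← hw, Matrix.mulVec_mulVec, hQQ]
  have hPQ : P * Q = Q := by
    apply ext_mulVec
    intro v
    have hmem : Q *ᵥ v ∈ LinearMap.range P.mulVecLin := by
      rw [hr]; exact ⟨v, by simp [Matrix.mulVecLin_apply]⟩
    obtain ⟨w, hw⟩ := hmem
    rw [Matrix.mulVecLin_apply] at hw
    rw [← Matrix.mulVec_mulVec, ← hw, Matrix.mulVec_mulVec, hPP]
  calc P = Pᵀ := hPt.symm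
    _ = (Q * P)ᵀ := by rw [hQP]
    _ = Pᵀ * Qᵀ := by rw [Matrix.transpose_mul]
    _ = P * Q := by rw [hPt, hQt]
    _ = Q := hPQ

lemma range_mul_pinv {n : ℕ} (A : Matrix (Fin n) (Fin n) ℝ) {P : Matrix (Fin n) (Fin n) ℝ}
    (hP : IsMoorePenrose A P) :
    LinearMap.range (A * P).mulVecLin = LinearMap.range A.mulVecLin := by
  apply le_antisymm
  · rintro y ⟨v, rfl⟩
    exact ⟨P *ᵥ v, by simp [Matrix.mulVecLin_apply, Matrix.mulVec_mulVec]⟩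
  · rintro y ⟨v, rfl⟩
    refine ⟨A *ᵥ v, ?_⟩
    simp only [Matrix.mulVecLin_apply, Matrix.mulVec_mulVec]
    rw [hP.1]

theorem pinv_antitone {n : ℕ} (B C : Matrix (Fin n) (Fin n) ℝ)
    (hB : B.PosSemidef) (hC : C.PosSemidef)
    (hspan : LinearMap.range B.mulVecLin = LinearMap.range C.mulVecLin)
    (hBC : lle B C) :
    lle (pinv C) (pinv B) := by
  have hBt : Bᵀ = B := t_of_herm hB.1
  have hCt : Cᵀ = C := t_of_herm hC.1
  have hBex : ∃ P, IsMoorePenrose B P := mp_exists B hB.1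
  have hCex : ∃ P, IsMoorePenrose C P := mp_exists C hC.1
  set P := pinv B with hPdef
  set Q := pinv C with hQdef
  have hPmp : IsMoorePenrose B P := pinv_spec B hBex
  have hQmp : IsMoorePenrose C Q := pinv_spec C hCex
  obtain ⟨hP1, hP2, hP3, hP4⟩ := pinv_spec B hBex
  obtain ⟨hQ1, hQ2, hQ3, hQ4⟩ := pinv_spec C hCex
  have hPt : Pᵀ = P := pinv_t hBt hBex
  have hQt : Qᵀ = Q := pinv_t hCt hCex
  -- the two projectors agree
  have hproj : B * P = C * Q := by
    apply proj_unique hP3 hQ3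
    · calc B * P * (B * P) = (B * P * B) * P := by simp only [Matrix.mul_assoc]
        _ = B * P := by rw [hP1]
    · calc C * Q * (C * Q) = (C * Q * C) * Q := by simp only [Matrix.mul_assoc]
        _ = C * Q := by rw [hQ1]
    · rw [range_mul_pinv B hPmp, range_mul_pinv C hQmp, hspan]
  have hCQQ : (C * Q) * Q = Q := by
    have h' : ((C * Q) * Q)ᵀ = Q := by
      rw [Matrix.transpose_mul, hQ3, hQt, ← Matrix.mul_assoc, hQ2]
    calc (C * Q) * Q = (((C * Q) * Q)ᵀ)ᵀ := (transpose_transpose _).symm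
      _ = Qᵀ := by rw [h']
      _ = Q := hQt
  have hBPQ : (B * P) * Q = Q := by rw [hproj]; exact hCQQ
  have hPBP : P * (B * P) = P := by rw [← Matrix.mul_assoc]; exact hP2
  -- positivity
  rw [lle, psd_iff]
  constructor
  · apply herm_of_t
    rw [Matrix.transpose_sub, hPt, hQt]
  · intro x
    set y : Fin n → ℝ := Q *ᵥ x with hy
    set p : Fin n → ℝ := P *ᵥ x with hp
    have key1 : 0 ≤ (y - p) ⬝ᵥ B *ᵥ (y - p) := by
      simpa using hB.dotProduct_mulVec_nonneg (y - p)
    have expand : (y - p) ⬝ᵥ B *ᵥ (y - p)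
        = y ⬝ᵥ B *ᵥ y - 2 * (y ⬝ᵥ B *ᵥ p) + p ⬝ᵥ B *ᵥ p := by
      rw [Matrix.mulVec_sub, dotProduct_sub, sub_dotProduct, sub_dotProduct,
        dot_symm hBt p y]
      ring
    have hb : y ⬝ᵥ B *ᵥ p = x ⬝ᵥ Q *ᵥ x := by
      calc y ⬝ᵥ B *ᵥ p = y ⬝ᵥ (B * P) *ᵥ x := by rw [hp, Matrix.mulVec_mulVec]
        _ = x ⬝ᵥ (B * P) *ᵥ y := dot_symm hP3 y x
        _ = x ⬝ᵥ ((B * P) * Q) *ᵥ x := by rw [hy, Matrix.mulVec_mulVec]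
        _ = x ⬝ᵥ Q *ᵥ x := by rw [hBPQ]
    have hc : p ⬝ᵥ B *ᵥ p = x ⬝ᵥ P *ᵥ x := by
      calc p ⬝ᵥ B *ᵥ p = x ⬝ᵥ (Pᵀ *ᵥ (B *ᵥ p)) := by rw [hp, mulVec_dot]
        _ = x ⬝ᵥ (P * (B * P)) *ᵥ x := by
            rw [hPt, hp, Matrix.mulVec_mulVec, Matrix.mulVec_mulVec, Matrix.mul_assoc]
        _ = x ⬝ᵥ P *ᵥ x := by rw [hPBP]
    have hd : y ⬝ᵥ B *ᵥ y ≤ y ⬝ᵥ C *ᵥ y := by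
      have h0 : (0:ℝ) ≤ y ⬝ᵥ C *ᵥ y - y ⬝ᵥ B *ᵥ y := by
        simpa [Matrix.sub_mulVec, dotProduct_sub] using hBC.dotProduct_mulVec_nonneg y
      linarith
    have he : y ⬝ᵥ C *ᵥ y = x ⬝ᵥ Q *ᵥ x := by
      calc y ⬝ᵥ C *ᵥ y = y ⬝ᵥ (C * Q) *ᵥ x := by rw [hy, Matrix.mulVec_mulVec]
        _ = x ⬝ᵥ (C * Q) *ᵥ y := dot_symm hQ3 y x
        _ = x ⬝ᵥ ((C * Q) * Q) *ᵥ x := by rw [hy, Matrix.mulVec_mulVec]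
        _ = x ⬝ᵥ Q *ᵥ x := by rw [hCQQ]
    have final : x ⬝ᵥ Q *ᵥ x ≤ x ⬝ᵥ P *ᵥ x := by
      rw [expand, hb, hc] at key1
      rw [he] at hd
      linarith
    rw [Matrix.sub_mulVec, dotProduct_sub]
    linarith
end
end

section
/- Head multiplicative bound: suppose (1−ε)CCᵀ − (ε/k)‖A−A_k‖_F²·I ⪯ AAᵀ ⪯ (1+ε)CCᵀ + (ε/k)‖A−A_k‖_F²·I. Let m be the largest index with σ_m(A)² ≥ ‖A−A_k‖_F²/k and let P_m = U_m U_mᵀ be the projection onto the top m left singular vectors of A. Then ((1−ε)/(1+ε))·P_m CCᵀ P_m ⪯ A_m A_mᵀ ⪯ ((1+ε)/(1−ε))·P_m CCᵀ P_m, where A_m A_mᵀ = P_m AAᵀ P_m. -/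
open Matrix BigOperators

noncomputable section

private lemma psd_smul {n : ℕ} {M : Matrix (Fin n) (Fin n) ℝ} (hM : M.PosSemidef)
    {c : ℝ} (hc : 0 ≤ c) : (c • M).PosSemidef := by
  refine ⟨?_, fun x => ?_⟩
  · show (c • M)ᴴ = c • M
    rw [conjTranspose_smul, hM.1.eq]
    simp
  · have h := mul_nonneg hc (hM.2 x)
    convert h using 1
    simp only [Finsupp.mul_sum, Matrix.smul_apply, smul_eq_mul, star_trivial]
    congr 1; ext i xi; congr 1; ext j xj; ring

theorem head_multiplicative_bound {n d d' k : ℕ} (hk : 1 ≤ k)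
    (A : Matrix (Fin n) (Fin d) ℝ) (C : Matrix (Fin n) (Fin d') ℝ)
    (eps : ℝ) (heps : 0 < eps) (heps1 : eps < 1)
    (h1 : lle ((1 - eps) • (C * Cᵀ) -
        (eps / (k : ℝ) * tailNorm2 k A) • (1 : Matrix (Fin n) (Fin n) ℝ)) (A * Aᵀ))
    (h2 : lle (A * Aᵀ) ((1 + eps) • (C * Cᵀ) +
        (eps / (k : ℝ) * tailNorm2 k A) • (1 : Matrix (Fin n) (Fin n) ℝ)))
    (P : Matrix (Fin n) (Fin n) ℝ) (hPsym : Pᵀ = P) (hPidem : P * P = P)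
    (hPcomm : P * (A * Aᵀ) = (A * Aᵀ) * P)
    (hhead : lle ((tailNorm2 k A / (k : ℝ)) • P) (P * (A * Aᵀ) * P)) :
    lle (((1 - eps) / (1 + eps)) • (P * (C * Cᵀ) * P)) (P * (A * Aᵀ) * P) ∧
      lle (P * (A * Aᵀ) * P) (((1 + eps) / (1 - eps)) • (P * (C * Cᵀ) * P)) := by
  classical
  set T : ℝ := tailNorm2 k A with hT
  set X : Matrix (Fin n) (Fin n) ℝ := P * (A * Aᵀ) * P with hX
  set Y : Matrix (Fin n) (Fin n) ℝ := P * (C * Cᵀ) * P with hY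
  have hPH : Pᴴ = P := by
    rw [conjTranspose_eq_transpose_of_trivial, hPsym]
  have hconj : ∀ M N : Matrix (Fin n) (Fin n) ℝ, (N - M).PosSemidef →
      (P * N * P - P * M * P).PosSemidef := by
    intro M N h
    have := h.mul_mul_conjTranspose_same P
    rw [hPH] at this
    simpa [Matrix.mul_sub, Matrix.sub_mul] using this
  have hsimpl : ∀ (a c : ℝ) (Z : Matrix (Fin n) (Fin d') ℝ),
      P * (a • (Z * Zᵀ) + c • (1 : Matrix (Fin n) (Fin n) ℝ)) * P
        = a • (P * (Z * Zᵀ) * P) + c • P := by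
    intro a c Z
    rw [Matrix.mul_add, Matrix.add_mul]
    rw [Matrix.mul_smul, Matrix.smul_mul, Matrix.mul_smul, Matrix.smul_mul,
      Matrix.mul_one, hPidem]
  -- conjugated upper bound
  have hU : ((1 + eps) • Y + (eps / (k : ℝ) * T) • P - X).PosSemidef := by
    have := hconj _ _ h2
    rwa [hsimpl] at this
  -- conjugated lower bound
  have hL : (X - ((1 - eps) • Y - (eps / (k : ℝ) * T) • P)).PosSemidef := by
    have h1' : lle ((1 - eps) • (C * Cᵀ) + (-(eps / (k : ℝ) * T)) • (1 : Matrix (Fin n) (Fin n) ℝ)) (A * Aᵀ) := by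
      have : (1 - eps) • (C * Cᵀ) + (-(eps / (k : ℝ) * T)) • (1 : Matrix (Fin n) (Fin n) ℝ)
          = (1 - eps) • (C * Cᵀ) - (eps / (k : ℝ) * T) • (1 : Matrix (Fin n) (Fin n) ℝ) := by
        module
      rw [this]; exact h1
    have := hconj _ _ h1'
    rw [hsimpl] at this
    have heq : (1 - eps) • Y + (-(eps / (k : ℝ) * T)) • P
        = (1 - eps) • Y - (eps / (k : ℝ) * T) • P := by
      module
    rwa [heq] at this
  have hH : (X - (T / (k : ℝ)) • P).PosSemidef := hhead
  have hεH : (eps • X - (eps / (k : ℝ) * T) • P).PosSemidef := by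
    have := psd_smul hH heps.le
    have heq : eps • (X - (T / (k : ℝ)) • P) = eps • X - (eps / (k : ℝ) * T) • P := by
      rw [smul_sub, smul_smul]
      ring_nf
    rwa [heq] at this
  have h1e : (0:ℝ) < 1 - eps := by linarith
  have h1e' : (0:ℝ) < 1 + eps := by linarith
  constructor
  · -- lower: ((1-eps)/(1+eps)) • Y ⪯ X
    have hsum : ((1 + eps) • X - (1 - eps) • Y).PosSemidef := by
      have := hL.add hεH
      have heq : X - ((1 - eps) • Y - (eps / (k : ℝ) * T) • P)
          + (eps • X - (eps / (k : ℝ) * T) • P) = (1 + eps) • X - (1 - eps) • Y := by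
        module
      rwa [heq] at this
    have := psd_smul hsum (le_of_lt (by positivity : (0:ℝ) < 1 / (1 + eps)))
    have heq : (1 / (1 + eps)) • ((1 + eps) • X - (1 - eps) • Y)
        = X - ((1 - eps) / (1 + eps)) • Y := by
      rw [smul_sub, smul_smul, smul_smul, one_div, inv_mul_cancel₀ h1e'.ne', one_smul]
      congr 1
      rw [div_eq_mul_inv, mul_comm]
    rw [heq] at this
    exact this
  · -- upper: X ⪯ ((1+eps)/(1-eps)) • Y
    have hsum : ((1 + eps) • Y - (1 - eps) • X).PosSemidef := by
      have := hU.add hεH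
      have heq : (1 + eps) • Y + (eps / (k : ℝ) * T) • P - X
          + (eps • X - (eps / (k : ℝ) * T) • P) = (1 + eps) • Y - (1 - eps) • X := by
        module
      rwa [heq] at this
    have := psd_smul hsum (le_of_lt (by positivity : (0:ℝ) < 1 / (1 - eps)))
    have heq : (1 / (1 - eps)) • ((1 + eps) • Y - (1 - eps) • X)
        = ((1 + eps) / (1 - eps)) • Y - X := by
      rw [smul_sub, smul_smul, smul_smul, one_div, inv_mul_cancel₀ h1e.ne', one_smul]
      congr 1
      rw [div_eq_mul_inv, mul_comm]
    rw [heq] at this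
    exact this
end
end

section
/- Frequent Directions ridge leverage approximation: suppose B ∈ ℝ^{n×3k} satisfies BBᵀ ⪯ AAᵀ ⪯ BBᵀ + (1/2)·(‖A−A_k‖_F²/k)·I, and assume ‖A−A_k‖_F² > 0. Then ‖A‖_F² − ‖B_k‖_F² satisfies ‖A−A_k‖_F² ≤ ‖A‖_F² − ‖B_k‖_F² ≤ 1.5·‖A−A_k‖_F², and consequently for every column aᵢ of A, (1/2)·τ̄_i(A) ≤ aᵢᵀ(BBᵀ + ((‖A‖_F² − ‖B_k‖_F²)/k)·I)⁻¹ aᵢ ≤ 2·τ̄_i(A). -/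
open Matrix BigOperators

noncomputable section

lemma frob2_nonneg {m n : ℕ} (A : Matrix (Fin m) (Fin n) ℝ) : 0 ≤ frob2 A :=
  Finset.sum_nonneg fun _ _ => Finset.sum_nonneg fun _ _ => sq_nonneg _

lemma frob2_eq_trace {m n : ℕ} (A : Matrix (Fin m) (Fin n) ℝ) :
    frob2 A = Matrix.trace (A * Aᵀ) := by
  simp [frob2, Matrix.trace, Matrix.diag, Matrix.mul_apply, sq]

lemma trace_psd_nonneg {n : ℕ} {M : Matrix (Fin n) (Fin n) ℝ} (h : M.PosSemidef) :
    0 ≤ Matrix.trace M := by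
  apply Finset.sum_nonneg
  intro i _
  have := h.dotProduct_mulVec_nonneg (fun j => if j = i then (1:ℝ) else 0)
  simpa [Matrix.mulVec, dotProduct] using this

lemma real_conjT {m n : ℕ} (A : Matrix (Fin m) (Fin n) ℝ) : Aᴴ = Aᵀ := by
  ext i j; simp [Matrix.conjTranspose_apply]

lemma psd_conj {n : ℕ} {M X : Matrix (Fin n) (Fin n) ℝ} (h : M.PosSemidef) (hX : Xᵀ = X) :
    (X * M * X).PosSemidef := by
  have := h.mul_mul_conjTranspose_same X
  rwa [real_conjT, hX] at this

lemma trace_proj_expand {n d : ℕ} (A : Matrix (Fin n) (Fin d) ℝ)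
    {X : Matrix (Fin n) (Fin n) ℝ} (hX1 : Xᵀ = X) (hX2 : X * X = X) :
    frob2 (A - X * A) = frob2 A - Matrix.trace (X * (A * Aᵀ)) := by
  rw [frob2_eq_trace, frob2_eq_trace]
  have : (A - X * A) * (A - X * A)ᵀ
      = A * Aᵀ - X * (A * Aᵀ) - (A * Aᵀ) * X + X * (A * Aᵀ) * X := by
    rw [Matrix.transpose_sub, Matrix.transpose_mul, hX1]
    rw [Matrix.sub_mul, Matrix.mul_sub, Matrix.mul_sub]
    simp only [Matrix.mul_assoc]
    abel
  rw [this]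
  have h1 : Matrix.trace ((A * Aᵀ) * X) = Matrix.trace (X * (A * Aᵀ)) :=
    Matrix.trace_mul_comm _ _
  have h2 : Matrix.trace (X * (A * Aᵀ) * X) = Matrix.trace (X * (A * Aᵀ)) := by
    rw [Matrix.trace_mul_comm (X * (A * Aᵀ)) X, ← Matrix.mul_assoc, hX2]
  rw [Matrix.trace_add, Matrix.trace_sub, Matrix.trace_sub, h1, h2]
  ring

lemma trace_proj_le {n k : ℕ} {X : Matrix (Fin n) (Fin n) ℝ}
    (hX2 : X * X = X) (hrk : X.rank ≤ k) : Matrix.trace X ≤ (k : ℝ) := by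
  classical
  set f := X.mulVecLin with hf
  have hidem : f ∘ₗ f = f := by
    rw [hf, ← Matrix.mulVecLin_mul, hX2]
  have hproj : LinearMap.IsProj (LinearMap.range f) f := by
    refine ⟨fun x => LinearMap.mem_range_self f x, ?_⟩
    rintro x ⟨y, rfl⟩
    exact congrFun (congrArg DFunLike.coe hidem) y
  have htr : LinearMap.trace ℝ (Fin n → ℝ) f
      = (Module.finrank ℝ (LinearMap.range f) : ℝ) := hproj.trace
  have hmt : LinearMap.trace ℝ (Fin n → ℝ) f = Matrix.trace X := by
    rw [LinearMap.trace_eq_matrix_trace ℝ (Pi.basisFun ℝ (Fin n)) f,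
      LinearMap.toMatrix_eq_toMatrix', hf]
    rw [← Matrix.toLin'_apply']
    rw [LinearMap.toMatrix'_toLin']
  rw [← hmt, htr]
  exact_mod_cast hrk

lemma trace_mono_proj {n : ℕ} {M N X : Matrix (Fin n) (Fin n) ℝ}
    (h : (N - M).PosSemidef) (hX1 : Xᵀ = X) (hX2 : X * X = X) :
    Matrix.trace (X * M) ≤ Matrix.trace (X * N) := by
  have hpsd : (X * (N - M) * X).PosSemidef := psd_conj h hX1
  have htr : Matrix.trace (X * (N - M) * X) = Matrix.trace (X * N) - Matrix.trace (X * M) := by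
    rw [Matrix.trace_mul_comm, ← Matrix.mul_assoc, hX2, Matrix.mul_sub, Matrix.trace_sub]
  have := trace_psd_nonneg hpsd
  linarith [htr ▸ this]

lemma smul_one_psd {n : ℕ} {c : ℝ} (hc : 0 ≤ c) :
    (c • (1 : Matrix (Fin n) (Fin n) ℝ)).PosSemidef := by
  rw [Matrix.posSemidef_iff_dotProduct_mulVec]
  constructor
  · ext i j
    simp only [Matrix.conjTranspose_apply, Matrix.smul_apply, Matrix.one_apply, star_trivial]
    by_cases h : j = i <;> by_cases h' : i = j <;> simp_all
  · intro x
    have : (c • (1 : Matrix (Fin n) (Fin n) ℝ)) *ᵥ x = c • x := by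
      simp [Matrix.smul_mulVec]
    rw [this]
    have : star x ⬝ᵥ c • x = c * (x ⬝ᵥ x) := by
      simp [dotProduct_smul, star_trivial, smul_eq_mul]
    rw [this]
    exact mul_nonneg hc (Finset.sum_nonneg fun i _ => mul_self_nonneg _)

lemma smul_one_posDef {n : ℕ} {c : ℝ} (hc : 0 < c) :
    (c • (1 : Matrix (Fin n) (Fin n) ℝ)).PosDef := by
  rw [Matrix.posDef_iff_dotProduct_mulVec]
  refine ⟨(smul_one_psd hc.le).1, fun x hx => ?_⟩
  have h1 : (c • (1 : Matrix (Fin n) (Fin n) ℝ)) *ᵥ x = c • x := by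
    simp [Matrix.smul_mulVec]
  rw [h1]
  have h2 : star x ⬝ᵥ c • x = c * (x ⬝ᵥ x) := by
    simp [dotProduct_smul, star_trivial, smul_eq_mul]
  rw [h2]
  have hxx : 0 < x ⬝ᵥ x := by
    obtain ⟨i, hi⟩ := Function.ne_iff.mp hx
    have : (0:ℝ) < x i * x i := mul_self_pos.mpr hi
    refine lt_of_lt_of_le this ?_
    exact Finset.single_le_sum (f := fun j => x j * x j)
      (fun j _ => mul_self_nonneg _) (Finset.mem_univ i)
  exact mul_pos hc hxx

lemma psd_cauchy_schwarz {n : ℕ} {M : Matrix (Fin n) (Fin n) ℝ} (hM : M.PosSemidef)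
    (a b : Fin n → ℝ) :
    (a ⬝ᵥ M *ᵥ b) ^ 2 ≤ (a ⬝ᵥ M *ᵥ a) * (b ⬝ᵥ M *ᵥ b) := by
  have hsym : Mᵀ = M := by
    have := hM.1
    rwa [Matrix.IsHermitian, real_conjT] at this
  have hcross : b ⬝ᵥ M *ᵥ a = a ⬝ᵥ M *ᵥ b := by
    rw [Matrix.dotProduct_mulVec, ← Matrix.mulVec_transpose, hsym, dotProduct_comm]
  have key : ∀ t : ℝ, 0 ≤ (b ⬝ᵥ M *ᵥ b) * (t * t) + (2 * (a ⬝ᵥ M *ᵥ b)) * t + (a ⬝ᵥ M *ᵥ a) := by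
    intro t
    have h0 := hM.dotProduct_mulVec_nonneg (a + t • b)
    simp only [star_trivial] at h0
    have hexp : (a + t • b) ⬝ᵥ M *ᵥ (a + t • b)
        = (a ⬝ᵥ M *ᵥ a) + t * (a ⬝ᵥ M *ᵥ b) + t * (b ⬝ᵥ M *ᵥ a)
          + t ^ 2 * (b ⬝ᵥ M *ᵥ b) := by
      rw [Matrix.mulVec_add, Matrix.mulVec_smul]
      rw [add_dotProduct, smul_dotProduct, dotProduct_add, dotProduct_add,
        dotProduct_smul, dotProduct_smul, smul_eq_mul, smul_eq_mul]
      ring_nf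
    rw [hexp, hcross] at h0
    nlinarith [h0]
  have hd := discrim_le_zero key
  rw [discrim] at hd
  nlinarith [hd]

lemma inv_quad_antitone {n : ℕ} {M N : Matrix (Fin n) (Fin n) ℝ}
    (hM : M.PosDef) (hN : N.PosDef) (h : (N - M).PosSemidef) (x : Fin n → ℝ) :
    x ⬝ᵥ N⁻¹ *ᵥ x ≤ x ⬝ᵥ M⁻¹ *ᵥ x := by
  have hMdet : IsUnit M.det := hM.det_pos.ne'.isUnit
  have hNdet : IsUnit N.det := hN.det_pos.ne'.isUnit
  set u := N⁻¹ *ᵥ x with hu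
  set v := M⁻¹ *ᵥ x with hv
  have hNu : N *ᵥ u = x := by
    rw [hu, Matrix.mulVec_mulVec, Matrix.mul_nonsing_inv _ hNdet, Matrix.one_mulVec]
  have hMv : M *ᵥ v = x := by
    rw [hv, Matrix.mulVec_mulVec, Matrix.mul_nonsing_inv _ hMdet, Matrix.one_mulVec]
  have hs : x ⬝ᵥ u = u ⬝ᵥ N *ᵥ u := by rw [hNu, dotProduct_comm]
  have hvx : x ⬝ᵥ v = v ⬝ᵥ M *ᵥ v := by rw [hMv, dotProduct_comm]
  have hs0 : 0 ≤ x ⬝ᵥ u := by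
    rw [hs]; simpa using hN.posSemidef.dotProduct_mulVec_nonneg u
  have hvx0 : 0 ≤ x ⬝ᵥ v := by
    rw [hvx]; simpa using hM.posSemidef.dotProduct_mulVec_nonneg v
  have hMu_le : u ⬝ᵥ M *ᵥ u ≤ x ⬝ᵥ u := by
    have := h.dotProduct_mulVec_nonneg u
    simp only [star_trivial, Matrix.sub_mulVec, dotProduct_sub] at this
    rw [hs]
    linarith
  have hMu0 : 0 ≤ u ⬝ᵥ M *ᵥ u := by simpa using hM.posSemidef.dotProduct_mulVec_nonneg u
  have hCS := psd_cauchy_schwarz hM.posSemidef u v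
  have huMv : u ⬝ᵥ M *ᵥ v = x ⬝ᵥ u := by rw [hMv, dotProduct_comm]
  rw [huMv] at hCS
  -- (x⬝u)^2 ≤ (u⬝Mu)(v⬝Mv) ≤ (x⬝u)(x⬝v)
  rcases eq_or_lt_of_le hs0 with h0 | h0
  · rw [← h0]; exact hvx0
  · have h1 : (x ⬝ᵥ u) ^ 2 ≤ (x ⬝ᵥ u) * (x ⬝ᵥ v) := by
      calc (x ⬝ᵥ u) ^ 2 ≤ (u ⬝ᵥ M *ᵥ u) * (v ⬝ᵥ M *ᵥ v) := hCS
        _ ≤ (x ⬝ᵥ u) * (x ⬝ᵥ v) := by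
            rw [← hvx]
            exact mul_le_mul_of_nonneg_right hMu_le (hvx ▸ (by simpa using hM.posSemidef.dotProduct_mulVec_nonneg v))
    nlinarith

lemma smul_inv_eq {n : ℕ} {M : Matrix (Fin n) (Fin n) ℝ} (hdet : IsUnit M.det)
    {c : ℝ} (hc : c ≠ 0) : ((c • M)⁻¹ : Matrix (Fin n) (Fin n) ℝ) = c⁻¹ • M⁻¹ := by
  apply Matrix.inv_eq_right_inv
  rw [Matrix.smul_mul, Matrix.mul_smul, smul_smul, Matrix.mul_nonsing_inv _ hdet,
    mul_inv_cancel₀ hc, one_smul]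

lemma projSet_nonempty {n d k : ℕ} (A : Matrix (Fin n) (Fin d) ℝ) :
    ({ e | ∃ X : Matrix (Fin n) (Fin n) ℝ, IsOrthProj k X ∧ e = frob2 (A - X * A) } : Set ℝ).Nonempty := by
  refine ⟨frob2 A, 0, ⟨Matrix.transpose_zero, by simp, ?_⟩, by simp⟩
  simp [Matrix.rank_zero]

lemma projSet_bdd {n d k : ℕ} (A : Matrix (Fin n) (Fin d) ℝ) :
    BddBelow ({ e | ∃ X : Matrix (Fin n) (Fin n) ℝ, IsOrthProj k X ∧ e = frob2 (A - X * A) } : Set ℝ) := by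
  refine ⟨0, fun e ⟨X, _, he⟩ => ?_⟩
  rw [he]; exact frob2_nonneg _

theorem frequent_directions_ridge_approx {n d k : ℕ} (hk : 1 ≤ k)
    (A : Matrix (Fin n) (Fin d) ℝ) (B : Matrix (Fin n) (Fin (3 * k)) ℝ)
    (htail : 0 < tailNorm2 k A)
    (h1 : lle (B * Bᵀ) (A * Aᵀ))
    (h2 : lle (A * Aᵀ) (B * Bᵀ +
        (tailNorm2 k A / (2 * (k : ℝ))) • (1 : Matrix (Fin n) (Fin n) ℝ))) :
    (tailNorm2 k A ≤ frob2 A - (frob2 B - tailNorm2 k B) ∧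
      frob2 A - (frob2 B - tailNorm2 k B) ≤ (3 / 2) * tailNorm2 k A) ∧
    ∀ i : Fin d,
      (1 / 2) * (_root_.col A i ⬝ᵥ
          ((A * Aᵀ + (tailNorm2 k A / (k : ℝ)) • (1 : Matrix (Fin n) (Fin n) ℝ))⁻¹ *ᵥ _root_.col A i))
        ≤ _root_.col A i ⬝ᵥ
          ((B * Bᵀ + ((frob2 A - (frob2 B - tailNorm2 k B)) / (k : ℝ)) •
            (1 : Matrix (Fin n) (Fin n) ℝ))⁻¹ *ᵥ _root_.col A i) ∧
      _root_.col A i ⬝ᵥ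
          ((B * Bᵀ + ((frob2 A - (frob2 B - tailNorm2 k B)) / (k : ℝ)) •
            (1 : Matrix (Fin n) (Fin n) ℝ))⁻¹ *ᵥ _root_.col A i)
        ≤ 2 * (_root_.col A i ⬝ᵥ
          ((A * Aᵀ + (tailNorm2 k A / (k : ℝ)) • (1 : Matrix (Fin n) (Fin n) ℝ))⁻¹ *ᵥ _root_.col A i)) := by
  classical
  have hkR : (0:ℝ) < (k:ℝ) := by exact_mod_cast hk
  set T := tailNorm2 k A with hT
  set c := frob2 A - (frob2 B - tailNorm2 k B) with hc
  have hs2 : (0:ℝ) ≤ T / (2 * k) := by positivity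
  -- trace comparison lemmas
  have keyB : ∀ X : Matrix (Fin n) (Fin n) ℝ, IsOrthProj k X →
      Matrix.trace (X * (B * Bᵀ)) ≤ Matrix.trace (X * (A * Aᵀ)) :=
    fun X hX => trace_mono_proj h1 hX.1 hX.2.1
  have keyA : ∀ X : Matrix (Fin n) (Fin n) ℝ, IsOrthProj k X →
      Matrix.trace (X * (A * Aᵀ)) ≤ Matrix.trace (X * (B * Bᵀ)) + T / 2 := by
    intro X hX
    have h := trace_mono_proj h2 hX.1 hX.2.1
    have hexp : X * (B * Bᵀ + (T / (2 * (k:ℝ))) • (1 : Matrix (Fin n) (Fin n) ℝ))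
        = X * (B * Bᵀ) + (T / (2 * (k:ℝ))) • X := by
      rw [Matrix.mul_add, Matrix.mul_smul, Matrix.mul_one]
    rw [hexp, Matrix.trace_add, Matrix.trace_smul, smul_eq_mul] at h
    have htX : Matrix.trace X ≤ (k:ℝ) := trace_proj_le hX.2.1 hX.2.2
    have hb : (T / (2 * k)) * Matrix.trace X ≤ (T / (2 * k)) * k :=
      mul_le_mul_of_nonneg_left htX hs2
    have heq : (T / (2 * k)) * (k:ℝ) = T / 2 := by field_simp
    linarith
  have lowA : ∀ X : Matrix (Fin n) (Fin n) ℝ, IsOrthProj k X →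
      T ≤ frob2 A - Matrix.trace (X * (A * Aᵀ)) := by
    intro X hX
    have hmem : frob2 (A - X * A) ∈
        { e | ∃ X : Matrix (Fin n) (Fin n) ℝ, IsOrthProj k X ∧ e = frob2 (A - X * A) } :=
      ⟨X, hX, rfl⟩
    have := csInf_le (projSet_bdd A) hmem
    rwa [trace_proj_expand A hX.1 hX.2.1] at this
  -- Part 1 lower bound
  have part1a : T ≤ c := by
    have hlb : T - frob2 A + frob2 B ≤ tailNorm2 k B := by
      apply le_csInf (projSet_nonempty B)
      rintro e ⟨X, hX, rfl⟩
      rw [trace_proj_expand B hX.1 hX.2.1]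
      have := keyB X hX
      have := lowA X hX
      linarith
    rw [hc]; linarith
  -- Part 1 upper bound
  have part1b : c ≤ (3 / 2) * T := by
    have hub : c - T / 2 ≤ T := by
      have key : c - T / 2 ≤ sInf { e | ∃ X : Matrix (Fin n) (Fin n) ℝ,
          IsOrthProj k X ∧ e = frob2 (A - X * A) } := by
        apply le_csInf (projSet_nonempty A)
        rintro e ⟨X, hX, rfl⟩
        rw [trace_proj_expand A hX.1 hX.2.1]
        have h1' := keyB X hX
        have h2' := keyA X hX
        have hB : tailNorm2 k B ≤ frob2 B - Matrix.trace (X * (B * Bᵀ)) := by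
          have hmem : frob2 (B - X * B) ∈
              { e | ∃ X : Matrix (Fin n) (Fin n) ℝ, IsOrthProj k X ∧ e = frob2 (B - X * B) } :=
            ⟨X, hX, rfl⟩
          have := csInf_le (projSet_bdd B) hmem
          rwa [trace_proj_expand B hX.1 hX.2.1] at this
        rw [hc]
        linarith
      exact key
    linarith
  refine ⟨⟨part1a, part1b⟩, ?_⟩
  -- Part 2
  have hkne : (k:ℝ) ≠ 0 := hkR.ne'
  set l := T / (k:ℝ) with hl
  set m := c / (k:ℝ) with hm
  have hlpos : 0 < l := by rw [hl]; positivity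
  have hmpos : 0 < m := by
    rw [hm]; exact div_pos (lt_of_lt_of_le htail part1a) hkR
  have hml : l ≤ m := by
    rw [hl, hm]; exact div_le_div_of_nonneg_right part1a hkR.le
  have hm32 : m ≤ (3/2) * l := by
    rw [hm, hl, div_le_iff₀ hkR]
    calc c ≤ (3/2) * T := part1b
      _ = (3/2) * (T / k) * k := by field_simp
  have hDpsd : (A * Aᵀ).PosSemidef := by
    have := Matrix.posSemidef_self_mul_conjTranspose A
    rwa [real_conjT] at this
  have hCpsd : (B * Bᵀ).PosSemidef := by
    have := Matrix.posSemidef_self_mul_conjTranspose B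
    rwa [real_conjT] at this
  set D := A * Aᵀ + l • (1 : Matrix (Fin n) (Fin n) ℝ) with hD
  set C := B * Bᵀ + m • (1 : Matrix (Fin n) (Fin n) ℝ) with hC
  have hDpd : D.PosDef := Matrix.PosDef.posSemidef_add hDpsd (smul_one_posDef hlpos)
  have hCpd : C.PosDef := Matrix.PosDef.posSemidef_add hCpsd (smul_one_posDef hmpos)
  have hD2pd : ((2:ℝ) • D).PosDef := by rw [two_smul]; exact hDpd.add hDpd
  have hC2pd : ((2:ℝ) • C).PosDef := by rw [two_smul]; exact hCpd.add hCpd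
  -- Loewner bounds
  have lle1 : ((2:ℝ) • D - C).PosSemidef := by
    have hid : (2:ℝ) • D - C
        = (A * Aᵀ - B * Bᵀ) + ((A * Aᵀ) + ((2 * l - m) • (1 : Matrix (Fin n) (Fin n) ℝ))) := by
      rw [hD, hC]; module
    rw [hid]
    exact (h1.add (hDpsd.add (smul_one_psd (by linarith))))
  have lle2 : ((2:ℝ) • C - D).PosSemidef := by
    have hlk : T / (2 * (k:ℝ)) = l / 2 := by rw [hl]; ring
    have hid : (2:ℝ) • C - D
        = ((B * Bᵀ + (T / (2 * (k:ℝ))) • (1 : Matrix (Fin n) (Fin n) ℝ)) - A * Aᵀ)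
          + ((B * Bᵀ) + ((2 * m - l - T / (2 * (k:ℝ))) • (1 : Matrix (Fin n) (Fin n) ℝ))) := by
      rw [hD, hC]; module
    rw [hid]
    refine h2.add (hCpsd.add (smul_one_psd ?_))
    rw [hlk]; linarith
  have hDdet : IsUnit D.det := hDpd.det_pos.ne'.isUnit
  have hCdet : IsUnit C.det := hCpd.det_pos.ne'.isUnit
  intro i
  set x := _root_.col A i with hx
  have hDinv2 : ((2:ℝ) • D)⁻¹ = (2:ℝ)⁻¹ • D⁻¹ := smul_inv_eq hDdet two_ne_zero
  have hCinv2 : ((2:ℝ) • C)⁻¹ = (2:ℝ)⁻¹ • C⁻¹ := smul_inv_eq hCdet two_ne_zero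
  have hleft := inv_quad_antitone hCpd hD2pd lle1 x
  have hright := inv_quad_antitone hDpd hC2pd lle2 x
  rw [hDinv2, Matrix.smul_mulVec, dotProduct_smul, smul_eq_mul] at hleft
  rw [hCinv2, Matrix.smul_mulVec, dotProduct_smul, smul_eq_mul] at hright
  constructor
  · calc (1/2) * (x ⬝ᵥ D⁻¹ *ᵥ x) = 2⁻¹ * (x ⬝ᵥ D⁻¹ *ᵥ x) := by norm_num
      _ ≤ x ⬝ᵥ C⁻¹ *ᵥ x := hleft
  · linarith
end
end
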